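/- Let P_1, P_2 be finite ranked posets with least and greatest elements satisfying rank P_1 = rank P_2 ≥ rank Q, and let P_1 + P_2 be their disjoint union obtained by identifying the two least elements and the two greatest elements. Then the restriction map f ↦ (f|_{P_1 × Q}, f|_{P_2 × Q}) is a lattice isomorphism from Quilts(P_1 + P_2, Q) to Quilts(P_1, Q) × Quilts(P_2, Q). -/

import Mathlib

/-- A quilt of alternating sign matrices of type `(P, Q)`, with respect to given rank
functions `rkP`, `rkQ`: a map `f : P × Q → ℕ` vanishing when either coordinate is the
least element, taking the value `min (rank P) (rank Q)` at `(⊤, ⊤)`, and satisfying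
Boolean growth along each cover relation of the product poset `P × Q`. -/
def IsQuilt {P Q : Type*} [PartialOrder P] [BoundedOrder P] [PartialOrder Q] [BoundedOrder Q]
    (rkP : P → ℕ) (rkQ : Q → ℕ) (f : P → Q → ℕ) : Prop :=
  (∀ y, f ⊥ y = 0) ∧
  (∀ x, f x ⊥ = 0) ∧
  f ⊤ ⊤ = min (rkP ⊤) (rkQ ⊤) ∧
  (∀ a b : P × Q, a ⋖ b → f b.1 b.2 = f a.1 a.2 ∨ f b.1 b.2 = f a.1 a.2 + 1)

section Glue

variable (P₁ P₂ : Type*) [PartialOrder P₁] [BoundedOrder P₁] [PartialOrder P₂] [BoundedOrder P₂]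

/-- The disjoint union `P₁ + P₂`: glue two bounded posets along their least and greatest
elements.  It is realized as `⊥`, `⊤`, and the disjoint (incomparable) union of the two
open intervals `P₁ \ {⊥, ⊤}` and `P₂ \ {⊥, ⊤}`. -/
abbrev GlueSum :=
  WithBot (WithTop ({a : P₁ // a ≠ ⊥ ∧ a ≠ ⊤} ⊕ {a : P₂ // a ≠ ⊥ ∧ a ≠ ⊤}))

variable {P₁ P₂}

open Classical in
/-- The canonical embedding of `P₁` into the glued poset. -/
noncomputable def glueEmb₁ (x : P₁) : GlueSum P₁ P₂ :=
  if h0 : x = ⊥ then ⊥ else if h1 : x = ⊤ then ⊤ else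
    (((Sum.inl ⟨x, h0, h1⟩ : {a : P₁ // a ≠ ⊥ ∧ a ≠ ⊤} ⊕ {a : P₂ // a ≠ ⊥ ∧ a ≠ ⊤}) :
      WithTop ({a : P₁ // a ≠ ⊥ ∧ a ≠ ⊤} ⊕ {a : P₂ // a ≠ ⊥ ∧ a ≠ ⊤})) : GlueSum P₁ P₂)

open Classical in
/-- The canonical embedding of `P₂` into the glued poset. -/
noncomputable def glueEmb₂ (x : P₂) : GlueSum P₁ P₂ :=
  if h0 : x = ⊥ then ⊥ else if h1 : x = ⊤ then ⊤ else
    (((Sum.inr ⟨x, h0, h1⟩ : {a : P₁ // a ≠ ⊥ ∧ a ≠ ⊤} ⊕ {a : P₂ // a ≠ ⊥ ∧ a ≠ ⊤}) :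
      WithTop ({a : P₁ // a ≠ ⊥ ∧ a ≠ ⊤} ⊕ {a : P₂ // a ≠ ⊥ ∧ a ≠ ⊤})) : GlueSum P₁ P₂)

/-- The rank function on the glued poset. -/
noncomputable def glueRank (rk₁ : P₁ → ℕ) (rk₂ : P₂ → ℕ) : GlueSum P₁ P₂ → ℕ :=
  WithBot.recBotCoe 0 (WithTop.recTopCoe (rk₁ ⊤) (Sum.elim (fun a => rk₁ a.1) (fun a => rk₂ a.1)))

end Glue

/-!
Since `rank Q ≤ rank Pᵢ`, Boolean growth along the top row `(⊤, ⊥) ⋖ ⋯ ⋖ (⊤, ⊤)` forces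
`f (⊤, y) = rank y` for every quilt `f`. So quilts on the two pieces agree on `{⊥, ⊤} × Q` and
glue to a map on `(P₁ + P₂) × Q`, which is a quilt because every cover of `P₁ + P₂` comes from a
cover of one piece. Conversely a cover of `Pᵢ` stays a cover of `P₁ + P₂` except possibly
`⊥ ⋖ ⊤`, where `rank Pᵢ = 1` bounds the top row by `1`; so restrictions of quilts are quilts.
Restriction is injective and reflects the order because every point other than `⊤` lies in one
of the pieces.
-/

def HasBooleanGrowth {α : Type*} [Preorder α] (g : α → ℕ) : Prop :=
  ∀ a b, a ⋖ b → g b = g a ∨ g b = g a + 1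

section FiniteOrder

variable {α : Type*} [PartialOrder α] [Finite α]

theorem monotone_of_forall_covBy {β : Type*} [Preorder β] {g : α → β}
    (h : ∀ a b, a ⋖ b → g a ≤ g b) : Monotone g :=
  letI := LocallyFiniteOrder.ofFiniteIcc (α := α) fun _ _ => Set.toFinite _
  (monotone_iff_forall_covBy g).2 h

theorem monotone_of_covBy_succ {r : α → ℕ} (hr : ∀ a b, a ⋖ b → r b = r a + 1) : Monotone r :=
  monotone_of_forall_covBy fun a b h => (hr a b h).symm ▸ Nat.le_succ _

theorem HasBooleanGrowth.add_le_add {g r : α → ℕ} (hg : HasBooleanGrowth g)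
    (hr : ∀ a b, a ⋖ b → r b = r a + 1) {a b : α} (hab : a ≤ b) :
    g b + r a ≤ g a + r b := by
  have hslack : Monotone fun a => (r a : ℤ) - g a := monotone_of_forall_covBy fun a b h => by
    have := hr a b h
    rcases hg a b h with h | h <;> omega
  have := hslack hab
  dsimp only at this
  omega

end FiniteOrder

namespace IsQuilt

variable {P Q : Type*} [PartialOrder P] [BoundedOrder P] [PartialOrder Q] [BoundedOrder Q]
  {rkP : P → ℕ} {rkQ : Q → ℕ} {f : P → Q → ℕ}

theorem of_hasBooleanGrowth (hbot_left : ∀ y, f ⊥ y = 0) (hbot_right : ∀ x, f x ⊥ = 0)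
    (htop : f ⊤ ⊤ = min (rkP ⊤) (rkQ ⊤)) (hleft : ∀ y, HasBooleanGrowth fun x => f x y)
    (hright : ∀ x, HasBooleanGrowth (f x)) : IsQuilt rkP rkQ f := by
  refine ⟨hbot_left, hbot_right, htop, ?_⟩
  rintro ⟨x, y⟩ ⟨x', y'⟩ h
  rcases Prod.mk_covBy_mk_iff.1 h with ⟨hx, rfl⟩ | ⟨hy, rfl⟩
  exacts [hleft y x x' hx, hright x y y' hy]

theorem hasBooleanGrowth_left (hf : IsQuilt rkP rkQ f) (y : Q) :
    HasBooleanGrowth fun x => f x y :=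
  fun x x' h => hf.2.2.2 (x, y) (x', y) (Prod.mk_covBy_mk_iff_left.2 h)

theorem hasBooleanGrowth_right (hf : IsQuilt rkP rkQ f) (x : P) : HasBooleanGrowth (f x) :=
  fun y y' h => hf.2.2.2 (x, y) (x, y') (Prod.mk_covBy_mk_iff_right.2 h)

theorem apply_top [Finite Q] (hf : IsQuilt rkP rkQ f) (hQ0 : rkQ ⊥ = 0)
    (hQc : ∀ x y : Q, x ⋖ y → rkQ y = rkQ x + 1) (hge : rkQ ⊤ ≤ rkP ⊤) (y : Q) :
    f ⊤ y = rkQ y := by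
  have h0 : f ⊤ ⊥ = 0 := hf.2.1 ⊤
  have h1 : f ⊤ ⊤ = rkQ ⊤ := hf.2.2.1.trans (min_eq_right hge)
  have hup := (hf.hasBooleanGrowth_right ⊤).add_le_add hQc (bot_le (a := y))
  have hlow := (hf.hasBooleanGrowth_right ⊤).add_le_add hQc (le_top (a := y))
  omega

theorem comp {R : Type*} [PartialOrder R] [BoundedOrder R] [Finite Q] {rkR : R → ℕ}
    {f : R → Q → ℕ} (hf : IsQuilt rkR rkQ f) (hP0 : rkP ⊥ = 0)
    (hPc : ∀ x y : P, x ⋖ y → rkP y = rkP x + 1) (hQ0 : rkQ ⊥ = 0)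
    (hQc : ∀ x y : Q, x ⋖ y → rkQ y = rkQ x + 1) (htop : rkR ⊤ = rkP ⊤)
    (hge : rkQ ⊤ ≤ rkP ⊤) {e : P → R} (he_bot : e ⊥ = ⊥) (he_top : (⊥ : P) ≠ ⊤ → e ⊤ = ⊤)
    (he_covBy : ∀ x y, x ⋖ y → e x ⋖ e y ∨ x = ⊥ ∧ y = ⊤) :
    IsQuilt rkP rkQ fun x y => f (e x) y := by
  refine of_hasBooleanGrowth (fun y => by rw [he_bot]; exact hf.1 y) (fun x => hf.2.1 _) ?_ ?_
    (fun x => hf.hasBooleanGrowth_right _)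
  · by_cases hbt : (⊥ : P) = ⊤
    · simp [← hbt, he_bot, hf.1, hP0]
    · rw [he_top hbt, hf.2.2.1, htop]
  · intro y x x' h
    rcases he_covBy x x' h with h' | ⟨rfl, rfl⟩
    · exact hf.hasBooleanGrowth_left y _ _ h'
    -- `e ⊥ ⋖ e ⊤` may fail, but `f (e ⊤) y = rank y ≤ rank P = 1`.
    have h_one : rkP ⊤ = 1 := by rw [hPc ⊥ ⊤ h, hP0]
    have h_top : f ⊤ y = rkQ y := hf.apply_top hQ0 hQc (htop ▸ hge) y
    have h_le : rkQ y ≤ rkQ ⊤ := monotone_of_covBy_succ hQc le_top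
    simp only [he_bot, he_top h.ne, hf.1, h_top]
    omega

end IsQuilt

section GlueSum

variable {P₁ P₂ : Type*} [PartialOrder P₁] [BoundedOrder P₁] [PartialOrder P₂] [BoundedOrder P₂]

@[elab_as_elim]
theorem GlueSum.induction {p : GlueSum P₁ P₂ → Prop} (bot : p ⊥) (top : p ⊤)
    (emb₁ : ∀ x : P₁, x ≠ ⊥ → x ≠ ⊤ → p (glueEmb₁ x))
    (emb₂ : ∀ x : P₂, x ≠ ⊥ → x ≠ ⊤ → p (glueEmb₂ x)) (a : GlueSum P₁ P₂) : p a := by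
  induction a using WithBot.recBotCoe with
  | bot => exact bot
  | coe a =>
  induction a using WithTop.recTopCoe with
  | top => exact top
  | coe a =>
  rcases a with ⟨x, hx⟩ | ⟨x, hx⟩
  · simpa [glueEmb₁, hx] using emb₁ x hx.1 hx.2
  · simpa [glueEmb₂, hx] using emb₂ x hx.1 hx.2

@[simp] theorem glueEmb₁_bot : (glueEmb₁ ⊥ : GlueSum P₁ P₂) = ⊥ := dif_pos rfl

@[simp] theorem glueEmb₂_bot : (glueEmb₂ ⊥ : GlueSum P₁ P₂) = ⊥ := dif_pos rfl

theorem glueEmb₁_top (h : (⊥ : P₁) ≠ ⊤) : (glueEmb₁ ⊤ : GlueSum P₁ P₂) = ⊤ := by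
  simp [glueEmb₁, h.symm]

theorem glueEmb₂_top (h : (⊥ : P₂) ≠ ⊤) : (glueEmb₂ ⊤ : GlueSum P₁ P₂) = ⊤ := by
  simp [glueEmb₂, h.symm]

noncomputable def glueOrderEmb₁ : P₁ ↪o GlueSum P₁ P₂ :=
  .ofMapLEIff glueEmb₁ fun x y => by unfold glueEmb₁; split_ifs <;> simp_all

noncomputable def glueOrderEmb₂ : P₂ ↪o GlueSum P₁ P₂ :=
  .ofMapLEIff glueEmb₂ fun x y => by unfold glueEmb₂; split_ifs <;> simp_all

theorem forall_glueSum_iff {p : GlueSum P₁ P₂ → Prop} (htop : p ⊤) :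
    (∀ a, p a) ↔ (∀ x, p (glueEmb₁ x)) ∧ ∀ x, p (glueEmb₂ x) :=
  ⟨fun h => ⟨fun _ => h _, fun _ => h _⟩, fun ⟨h₁, h₂⟩ a => by
    induction a using GlueSum.induction with
    | bot => simpa using h₁ ⊥
    | top => exact htop
    | emb₁ x => exact h₁ x
    | emb₂ x => exact h₂ x⟩

theorem glueEmb₁_covBy_or {x y : P₁} (h : x ⋖ y) :
    (glueEmb₁ x : GlueSum P₁ P₂) ⋖ glueEmb₁ y ∨ x = ⊥ ∧ y = ⊤ := by
  refine or_iff_not_imp_right.2 fun hxy => ⟨glueOrderEmb₁.strictMono h.lt, fun c hxc hcy => ?_⟩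
  induction c using GlueSum.induction with
  | bot => exact not_lt_bot hxc
  | top => exact not_top_lt hcy
  | emb₁ z => exact h.2 (glueOrderEmb₁.lt_iff_lt.1 hxc) (glueOrderEmb₁.lt_iff_lt.1 hcy)
  | emb₂ z hz₀ hz₁ =>
    -- an interior point of `P₂` is comparable only with `⊥` and `⊤`
    unfold glueEmb₁ glueEmb₂ at *
    split_ifs at * <;> simp_all

theorem glueEmb₂_covBy_or {x y : P₂} (h : x ⋖ y) :
    (glueEmb₂ x : GlueSum P₁ P₂) ⋖ glueEmb₂ y ∨ x = ⊥ ∧ y = ⊤ := by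
  refine or_iff_not_imp_right.2 fun hxy => ⟨glueOrderEmb₂.strictMono h.lt, fun c hxc hcy => ?_⟩
  induction c using GlueSum.induction with
  | bot => exact not_lt_bot hxc
  | top => exact not_top_lt hcy
  | emb₁ z hz₀ hz₁ =>
    unfold glueEmb₁ glueEmb₂ at *
    split_ifs at * <;> simp_all
  | emb₂ z => exact h.2 (glueOrderEmb₂.lt_iff_lt.1 hxc) (glueOrderEmb₂.lt_iff_lt.1 hcy)

theorem mem_range_glueEmb₁_of_le {x : P₁} (hx₀ : x ≠ ⊥) (hx₁ : x ≠ ⊤) {b : GlueSum P₁ P₂}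
    (h : glueEmb₁ x ≤ b) : b ∈ Set.range glueEmb₁ := by
  induction b using GlueSum.induction with
  | bot => exact ⟨⊥, glueEmb₁_bot⟩
  | top => exact ⟨⊤, glueEmb₁_top (ne_bot_of_le_ne_bot hx₀ (le_top (a := x))).symm⟩
  | emb₁ y => exact ⟨y, rfl⟩
  | emb₂ y hy₀ hy₁ =>
    unfold glueEmb₁ glueEmb₂ at h
    split_ifs at h <;> simp_all

theorem mem_range_glueEmb₂_of_le {x : P₂} (hx₀ : x ≠ ⊥) (hx₁ : x ≠ ⊤) {b : GlueSum P₁ P₂}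
    (h : glueEmb₂ x ≤ b) : b ∈ Set.range glueEmb₂ := by
  induction b using GlueSum.induction with
  | bot => exact ⟨⊥, glueEmb₂_bot⟩
  | top => exact ⟨⊤, glueEmb₂_top (ne_bot_of_le_ne_bot hx₀ (le_top (a := x))).symm⟩
  | emb₁ y hy₀ hy₁ =>
    unfold glueEmb₁ glueEmb₂ at h
    split_ifs at h <;> simp_all
  | emb₂ y => exact ⟨y, rfl⟩

theorem mem_range_glueEmb_of_covBy {a b : GlueSum P₁ P₂} (h : a ⋖ b) :
    (a ∈ Set.range glueEmb₁ ∧ b ∈ Set.range glueEmb₁) ∨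
      (a ∈ Set.range glueEmb₂ ∧ b ∈ Set.range glueEmb₂) ∨ (a = ⊥ ∧ b = ⊤ ∧ (⊥ : P₁) = ⊤) := by
  induction a using GlueSum.induction with
  | bot =>
    induction b using GlueSum.induction with
    | bot => exact (lt_irrefl _ h.lt).elim
    | top =>
      by_cases hP : (⊥ : P₁) = ⊤
      · exact .inr (.inr ⟨rfl, rfl, hP⟩)
      · exact .inl ⟨⟨⊥, glueEmb₁_bot⟩, ⟨⊤, glueEmb₁_top hP⟩⟩
    | emb₁ y => exact .inl ⟨⟨⊥, glueEmb₁_bot⟩, ⟨y, rfl⟩⟩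
    | emb₂ y => exact .inr (.inl ⟨⟨⊥, glueEmb₂_bot⟩, ⟨y, rfl⟩⟩)
  | top => exact (not_top_lt h.lt).elim
  | emb₁ x hx₀ hx₁ => exact .inl ⟨⟨x, rfl⟩, mem_range_glueEmb₁_of_le hx₀ hx₁ h.le⟩
  | emb₂ x hx₀ hx₁ => exact .inr (.inl ⟨⟨x, rfl⟩, mem_range_glueEmb₂_of_le hx₀ hx₁ h.le⟩)

variable {Q : Type*} {rkQ : Q → ℕ} {f₁ : P₁ → Q → ℕ} {f₂ : P₂ → Q → ℕ}

variable (rkQ f₁ f₂) in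
noncomputable def glueQuilt : GlueSum P₁ P₂ → Q → ℕ :=
  WithBot.recBotCoe 0 (WithTop.recTopCoe rkQ (Sum.elim (fun s => f₁ s.1) (fun s => f₂ s.1)))

@[simp] theorem glueQuilt_bot : glueQuilt rkQ f₁ f₂ ⊥ = 0 := rfl

@[simp] theorem glueQuilt_top : glueQuilt rkQ f₁ f₂ ⊤ = rkQ := rfl

theorem glueQuilt_glueEmb₁ (hbot : f₁ ⊥ = 0) (htop : f₁ ⊤ = rkQ) (x : P₁) :
    glueQuilt rkQ f₁ f₂ (glueEmb₁ x) = f₁ x := by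
  unfold glueEmb₁
  split_ifs
  · simp_all
  · simp_all
  · rfl

theorem glueQuilt_glueEmb₂ (hbot : f₂ ⊥ = 0) (htop : f₂ ⊤ = rkQ) (x : P₂) :
    glueQuilt rkQ f₁ f₂ (glueEmb₂ x) = f₂ x := by
  unfold glueEmb₂
  split_ifs
  · simp_all
  · simp_all
  · rfl

theorem isQuilt_glueQuilt [PartialOrder Q] [BoundedOrder Q] [Finite Q] {rk₁ : P₁ → ℕ}
    {rk₂ : P₂ → ℕ} (h10 : rk₁ ⊥ = 0) (hQ0 : rkQ ⊥ = 0)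
    (hQc : ∀ x y : Q, x ⋖ y → rkQ y = rkQ x + 1) (heq : rk₁ ⊤ = rk₂ ⊤)
    (hge : rkQ ⊤ ≤ rk₁ ⊤) (hf₁ : IsQuilt rk₁ rkQ f₁) (hf₂ : IsQuilt rk₂ rkQ f₂) :
    IsQuilt (glueRank rk₁ rk₂) rkQ (glueQuilt rkQ f₁ f₂) := by
  have he₁ := glueQuilt_glueEmb₁ (f₂ := f₂) (funext hf₁.1) (funext (hf₁.apply_top hQ0 hQc hge))
  have he₂ := glueQuilt_glueEmb₂ (f₁ := f₁) (funext hf₂.1)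
    (funext (hf₂.apply_top hQ0 hQc (heq ▸ hge)))
  refine .of_hasBooleanGrowth (fun _ => rfl) ?_ (min_eq_right hge).symm ?_ ?_
  · refine (forall_glueSum_iff hQ0).2 ⟨fun x => ?_, fun x => ?_⟩
    · rw [he₁]; exact hf₁.2.1 x
    · rw [he₂]; exact hf₂.2.1 x
  · intro y a b h
    rcases mem_range_glueEmb_of_covBy h with
      ⟨⟨x, rfl⟩, ⟨x', rfl⟩⟩ | ⟨⟨x, rfl⟩, ⟨x', rfl⟩⟩ | ⟨rfl, rfl, hP⟩
    · simp only [he₁]; exact hf₁.hasBooleanGrowth_left y x x' (h.of_image glueOrderEmb₁)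
    · simp only [he₂]; exact hf₂.hasBooleanGrowth_left y x x' (h.of_image glueOrderEmb₂)
    · have : rkQ y ≤ rkQ ⊤ := monotone_of_covBy_succ hQc le_top
      have : rk₁ ⊤ = 0 := hP ▸ h10
      exact .inl (show rkQ y = 0 by omega)
  · refine (forall_glueSum_iff fun y y' h => .inr (hQc y y' h)).2 ⟨fun x => ?_, fun x => ?_⟩
    · rw [he₁]; exact hf₁.hasBooleanGrowth_right x
    · rw [he₂]; exact hf₂.hasBooleanGrowth_right x

end GlueSum

theorem quilts_of_glued_sum_general
    {P₁ P₂ Q : Type*}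
    [PartialOrder P₁] [BoundedOrder P₁]
    [PartialOrder P₂] [BoundedOrder P₂]
    [Fintype Q] [PartialOrder Q] [BoundedOrder Q]
    (rk₁ : P₁ → ℕ) (rk₂ : P₂ → ℕ) (rkQ : Q → ℕ)
    (h10 : rk₁ ⊥ = 0) (h1c : ∀ x y : P₁, x ⋖ y → rk₁ y = rk₁ x + 1)
    (h20 : rk₂ ⊥ = 0) (h2c : ∀ x y : P₂, x ⋖ y → rk₂ y = rk₂ x + 1)
    (hQ0 : rkQ ⊥ = 0) (hQc : ∀ x y : Q, x ⋖ y → rkQ y = rkQ x + 1)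
    (heq : rk₁ ⊤ = rk₂ ⊤) (hge : rkQ ⊤ ≤ rk₁ ⊤) :
    Set.BijOn
      (fun f : GlueSum P₁ P₂ → Q → ℕ =>
        ((fun x y => f (glueEmb₁ x) y), (fun x y => f (glueEmb₂ x) y)))
      {f | IsQuilt (glueRank rk₁ rk₂) rkQ f}
      {p : (P₁ → Q → ℕ) × (P₂ → Q → ℕ) | IsQuilt rk₁ rkQ p.1 ∧ IsQuilt rk₂ rkQ p.2} ∧
    (∀ f g : GlueSum P₁ P₂ → Q → ℕ,
      IsQuilt (glueRank rk₁ rk₂) rkQ f → IsQuilt (glueRank rk₁ rk₂) rkQ g →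
      ((∀ (a : GlueSum P₁ P₂) (y : Q), f a y ≤ g a y) ↔
        ((∀ (x : P₁) (y : Q), f (glueEmb₁ x) y ≤ g (glueEmb₁ x) y) ∧
         (∀ (x : P₂) (y : Q), f (glueEmb₂ x) y ≤ g (glueEmb₂ x) y)))) := by
  have hge₂ : rkQ ⊤ ≤ rk₂ ⊤ := heq ▸ hge
  have htop {f : GlueSum P₁ P₂ → Q → ℕ} (hf : IsQuilt (glueRank rk₁ rk₂) rkQ f) : f ⊤ = rkQ :=
    funext (hf.apply_top hQ0 hQc hge)
  refine ⟨⟨fun f hf => ⟨?_, ?_⟩, fun f hf g hg hfg => ?_, ?_⟩, fun f g hf hg => ?_⟩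
  · exact hf.comp h10 h1c hQ0 hQc rfl hge glueEmb₁_bot glueEmb₁_top fun _ _ => glueEmb₁_covBy_or
  · exact hf.comp h20 h2c hQ0 hQc heq hge₂ glueEmb₂_bot glueEmb₂_top fun _ _ => glueEmb₂_covBy_or
  · obtain ⟨h₁, h₂⟩ := Prod.ext_iff.1 hfg
    exact funext ((forall_glueSum_iff (by rw [htop hf, htop hg])).2
      ⟨congrFun h₁, congrFun h₂⟩)
  · rintro ⟨f₁, f₂⟩ ⟨hf₁, hf₂⟩
    refine ⟨glueQuilt rkQ f₁ f₂, isQuilt_glueQuilt h10 hQ0 hQc heq hge hf₁ hf₂, ?_⟩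
    ext x : 2
    · exact glueQuilt_glueEmb₁ (funext hf₁.1) (funext (hf₁.apply_top hQ0 hQc hge)) x
    · exact glueQuilt_glueEmb₂ (funext hf₂.1) (funext (hf₂.apply_top hQ0 hQc hge₂)) x
  · exact forall_glueSum_iff (by simp [htop hf, htop hg])

/-- If `rank P₁ = rank P₂ ≥ rank Q`, then the restriction map
`f ↦ (f|_{P₁ × Q}, f|_{P₂ × Q})` is a lattice isomorphism from `Quilts(P₁ + P₂, Q)` to
`Quilts(P₁, Q) × Quilts(P₂, Q)`: it is a bijection between the quilt sets which preserves
and reflects the pointwise order. -/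
theorem quilts_of_glued_sum
    {P₁ P₂ Q : Type*}
    [Fintype P₁] [PartialOrder P₁] [BoundedOrder P₁]
    [Fintype P₂] [PartialOrder P₂] [BoundedOrder P₂]
    [Fintype Q] [PartialOrder Q] [BoundedOrder Q]
    (rk₁ : P₁ → ℕ) (rk₂ : P₂ → ℕ) (rkQ : Q → ℕ)
    (h10 : rk₁ ⊥ = 0) (h1c : ∀ x y : P₁, x ⋖ y → rk₁ y = rk₁ x + 1)
    (h20 : rk₂ ⊥ = 0) (h2c : ∀ x y : P₂, x ⋖ y → rk₂ y = rk₂ x + 1)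
    (hQ0 : rkQ ⊥ = 0) (hQc : ∀ x y : Q, x ⋖ y → rkQ y = rkQ x + 1)
    (heq : rk₁ ⊤ = rk₂ ⊤) (hge : rkQ ⊤ ≤ rk₁ ⊤) :
    Set.BijOn
      (fun f : GlueSum P₁ P₂ → Q → ℕ =>
        ((fun x y => f (glueEmb₁ x) y), (fun x y => f (glueEmb₂ x) y)))
      {f | IsQuilt (glueRank rk₁ rk₂) rkQ f}
      {p : (P₁ → Q → ℕ) × (P₂ → Q → ℕ) | IsQuilt rk₁ rkQ p.1 ∧ IsQuilt rk₂ rkQ p.2} ∧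
    (∀ f g : GlueSum P₁ P₂ → Q → ℕ,
      IsQuilt (glueRank rk₁ rk₂) rkQ f → IsQuilt (glueRank rk₁ rk₂) rkQ g →
      ((∀ (a : GlueSum P₁ P₂) (y : Q), f a y ≤ g a y) ↔
        ((∀ (x : P₁) (y : Q), f (glueEmb₁ x) y ≤ g (glueEmb₁ x) y) ∧
         (∀ (x : P₂) (y : Q), f (glueEmb₂ x) y ≤ g (glueEmb₂ x) y)))) :=
  quilts_of_glued_sum_general rk₁ rk₂ rkQ h10 h1c h20 h2c hQ0 hQc heq hge
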